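/- For all t > 0 and x > 0, with p₂(t,x,y) = (1/√(2π t x)) e^{−(x+y)/(2t)} cosh(√(xy)/t), one has ∫_0^∞ p₂(t,x,y) dy = √(2t/(π x)) e^{−x/(2t)} + erf(√(x/(2t))). -/

import Mathlib

open Real MeasureTheory

/-- The error function `erf z = (2/√π) ∫_0^z e^{-s²} ds`. -/
noncomputable def errFun (z : ℝ) : ℝ :=
  (2 / Real.sqrt π) * ∫ s in (0 : ℝ)..z, Real.exp (-s ^ 2)

open Filter Topology

/-!
With `a = √x`, `s = 2t` and `y = u²`, the identity
`e^{-(a²+u²)/s} cosh(2au/s) = (e^{-(u-a)²/s} + e^{-(u+a)²/s}) / 2` turns `p₂(y) dy` into a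
sum of two first moments `u e^{-(u ∓ a)²/s} du`. Each has the explicit primitive `gaussPrim`
(an exponential plus an `erf` term), so the integral is evaluated by the fundamental theorem
of calculus on `(0, ∞)`; the `erf` limits at infinity cancel between the two terms.
-/

lemma hasDerivAt_errFun (z : ℝ) : HasDerivAt errFun (2 / √π * exp (-z ^ 2)) z := by
  have hc : Continuous fun s : ℝ => exp (-s ^ 2) := by fun_prop
  exact (intervalIntegral.integral_hasDerivAt_right (hc.intervalIntegrable _ _)
    (hc.stronglyMeasurableAtFilter _ _) hc.continuousAt).const_mul _

lemma errFun_neg (z : ℝ) : errFun (-z) = -errFun z := by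
  have h := intervalIntegral.integral_comp_neg (a := 0) (b := z) fun s : ℝ => exp (-s ^ 2)
  simp only [neg_zero, even_two, Even.neg_pow] at h
  rw [errFun, errFun, intervalIntegral.integral_symm, ← h]
  ring

lemma tendsto_errFun_atTop : Tendsto errFun atTop (𝓝 1) := by
  have hint : IntegrableOn (fun s : ℝ => exp (-s ^ 2)) (Set.Ioi 0) := by
    simpa using (integrable_exp_neg_mul_sq one_pos).integrableOn
  have h := (intervalIntegral_tendsto_integral_Ioi 0 hint tendsto_id).const_mul (2 / √π)
  have hval : ∫ s in Set.Ioi (0 : ℝ), exp (-s ^ 2) = √π / 2 := by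
    simpa using integral_gaussian_Ioi 1
  rw [hval, div_mul_div_cancel₀ (by positivity : √π ≠ 0), div_self two_ne_zero] at h
  exact h

lemma exp_mul_cosh_eq (s a u : ℝ) :
    exp (-(a ^ 2 + u ^ 2) / s) * cosh (2 * a * u / s)
      = (exp (-(u - a) ^ 2 / s) + exp (-(u + a) ^ 2 / s)) / 2 := by
  rw [cosh_eq, mul_div_assoc', mul_add, ← exp_add, ← exp_add]
  congr 3 <;> ring

noncomputable def gaussPrim (s c u : ℝ) : ℝ :=
  -s * exp (-(u - c) ^ 2 / s) + c * √(π * s) * errFun ((u - c) / √s)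

lemma gaussPrim_zero (s c : ℝ) :
    gaussPrim s c 0 = -s * exp (-c ^ 2 / s) - c * √(π * s) * errFun (c / √s) := by
  rw [gaussPrim, zero_sub, neg_sq, neg_div √s c, errFun_neg]
  ring

variable {s : ℝ}

lemma hasDerivAt_gaussPrim (hs : 0 < s) (c u : ℝ) :
    HasDerivAt (gaussPrim s c) (2 * u * exp (-(u - c) ^ 2 / s)) u := by
  have hexp : HasDerivAt (fun u => exp (-(u - c) ^ 2 / s))
      (exp (-(u - c) ^ 2 / s) * (-(2 * (u - c)) / s)) u := by
    have := (((hasDerivAt_id u).sub_const c).pow 2).neg.div_const s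
    simpa using this.exp
  have herf := (hasDerivAt_errFun ((u - c) / √s)).comp u
    (((hasDerivAt_id u).sub_const c).div_const √s)
  refine ((hexp.const_mul (-s)).add (herf.const_mul (c * √(π * s)))).congr_deriv ?_
  have hsq : (√s) ^ 2 = s := sq_sqrt hs.le
  rw [sqrt_mul pi_pos.le, div_pow, hsq]
  field_simp
  ring

lemma tendsto_gaussPrim_atTop (hs : 0 < s) (c : ℝ) :
    Tendsto (gaussPrim s c) atTop (𝓝 (c * √(π * s))) := by
  have hlin : Tendsto (fun u : ℝ => u - c) atTop atTop :=
    tendsto_atTop_add_const_right _ _ tendsto_id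
  have hexp : Tendsto (fun u => exp (-(u - c) ^ 2 / s)) atTop (𝓝 0) := by
    have := ((tendsto_pow_atTop two_ne_zero).comp hlin).atTop_div_const hs
    exact (tendsto_exp_neg_atTop_nhds_zero.comp this).congr fun u => by simp [neg_div]
  have herf := tendsto_errFun_atTop.comp (hlin.atTop_div_const (sqrt_pos.2 hs))
  have := (hexp.const_mul (-s)).add (herf.const_mul (c * √(π * s)))
  rwa [mul_zero, mul_one, zero_add] at this

theorem integral_Ioi_exp_mul_cosh_sqrt (hs : 0 < s) (a : ℝ) :
    ∫ y in Set.Ioi 0, exp (-(a ^ 2 + y) / s) * cosh (2 * a * √y / s)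
      = s * exp (-a ^ 2 / s) + a * √(π * s) * errFun (a / √s) := by
  set G : ℝ → ℝ := fun u => (gaussPrim s a u + gaussPrim s (-a) u) / 2
  have hG : ∀ u, HasDerivAt G
      (2 * u * (exp (-(a ^ 2 + u ^ 2) / s) * cosh (2 * a * u / s))) u := by
    intro u
    refine (((hasDerivAt_gaussPrim hs a u).add
      (hasDerivAt_gaussPrim hs (-a) u)).div_const 2).congr_deriv ?_
    rw [exp_mul_cosh_eq, sub_neg_eq_add]
    ring
  have hF : ∀ y ∈ Set.Ioi (0 : ℝ), HasDerivAt (fun y => G √y)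
      (exp (-(a ^ 2 + y) / s) * cosh (2 * a * √y / s)) y := by
    intro y hy
    have hy' : √y ≠ 0 := (sqrt_pos.2 hy).ne'
    refine ((hG √y).comp y (hasDerivAt_sqrt (ne_of_gt hy))).congr_deriv ?_
    rw [sq_sqrt (le_of_lt hy)]
    field_simp
  have hlim : Tendsto (fun y => G √y) atTop (𝓝 0) := by
    have := ((tendsto_gaussPrim_atTop hs a).add (tendsto_gaussPrim_atTop hs (-a))).div_const 2
    rw [neg_mul, add_neg_cancel, zero_div] at this
    exact this.comp tendsto_sqrt_atTop
  have hcont : Continuous fun y => G √y :=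
    (continuous_iff_continuousAt.2 fun u => (hG u).continuousAt).comp continuous_sqrt
  rw [integral_Ioi_of_hasDerivAt_of_nonneg hcont.continuousWithinAt hF
    (fun y _ => mul_nonneg (exp_pos _).le (cosh_pos _).le) hlim]
  simp only [G, sqrt_zero, gaussPrim_zero, neg_sq, neg_div √s a, errFun_neg]
  ring

theorem stmt_5 (t x : ℝ) (ht : 0 < t) (hx : 0 < x)
    (p₂ : ℝ → ℝ)
    (hp₂ : ∀ y, p₂ y = (1 / Real.sqrt (2 * π * t * x)) * Real.exp (-(x + y) / (2 * t))
        * Real.cosh (Real.sqrt (x * y) / t)) :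
    (∫ y in Set.Ioi (0 : ℝ), p₂ y)
      = Real.sqrt (2 * t / (π * x)) * Real.exp (-x / (2 * t))
        + errFun (Real.sqrt (x / (2 * t))) := by
  have hp : p₂ = fun y => 1 / √(2 * π * t * x) *
      (exp (-(√x ^ 2 + y) / (2 * t)) * cosh (2 * √x * √y / (2 * t))) := by
    ext y
    rw [hp₂, sq_sqrt hx.le, sqrt_mul hx.le, mul_assoc 2 √x √y,
      mul_div_mul_left _ t two_ne_zero, mul_assoc]
  have hexp_coef : 1 / √(2 * π * t * x) * (2 * t) = √(2 * t / (π * x)) := by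
    rw [← sqrt_sq (by positivity : 0 ≤ 1 / √(2 * π * t * x) * (2 * t)), mul_pow, div_pow,
      sq_sqrt (by positivity)]
    congr 1
    field_simp
  have herf_coef : 1 / √(2 * π * t * x) * (√x * √(π * (2 * t))) = 1 := by
    rw [← sqrt_mul hx.le, show x * (π * (2 * t)) = 2 * π * t * x by ring,
      one_div_mul_cancel (by positivity)]
  rw [hp, integral_const_mul, integral_Ioi_exp_mul_cosh_sqrt (by positivity), sq_sqrt hx.le,
    sqrt_div hx.le]
  linear_combination exp (-x / (2 * t)) * hexp_coef + errFun (√x / √(2 * t)) * herf_coef
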